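/- Let {A_q : q ∈ ℤ≥0} be a family of subsets of [0,∞) such that A_q is a q-nebula for every q ∈ ℤ≥0. Then the intersection ⋂_{q∈ℤ≥0} A_q is a closed, totally disconnected subset of [0,∞) containing 0. -/

import Mathlib

/-!
A preconnected subset of a finite disjoint union of closed sets lies in one of them. Hence an
interval `[x, y]` contained in a `q`-nebula lies in one of its intervals; if `y ≤ q` this cannot
be the unbounded one, so `y - x < 2^{-q}`. An interval contained in every `A q` therefore has
length `< 2^{-q}` for all large `q`, so it is a point.
-/

open Set

/-- A closed subset `A` of `[0,∞)` is a `q`-nebula if it is a disjoint union of closed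
intervals `I 0, …, I k` with `0 ∈ I 0`, the intervals `I 0, …, I (k-1)` compact of diameter
`< 2^{-q}`, and `I k` an unbounded closed interval contained in `(q, ∞)`. -/
def IsNebula (q : ℕ) (A : Set ℝ) : Prop :=
  IsClosed A ∧ A ⊆ Set.Ici 0 ∧
  ∃ (k : ℕ) (I : Fin (k + 1) → Set ℝ),
    A = ⋃ i, I i ∧
    (0 : ℝ) ∈ I 0 ∧
    (∀ i : Fin (k + 1), (i : ℕ) < k →
      ∃ a b : ℝ, a ≤ b ∧ I i = Set.Icc a b ∧ b - a < (2 : ℝ) ^ (-(q : ℤ))) ∧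
    (∃ a : ℝ, I (Fin.last k) = Set.Ici a ∧ (q : ℝ) < a) ∧
    Pairwise (Function.onFun Disjoint I)

open Filter Function Topology

theorem IsPreconnected.subset_of_subset_iUnion_of_isClosed {α ι : Type*} [TopologicalSpace α]
    [Finite ι] {s : ι → Set α} {t : Set α} {x : α} {i : ι} (ht : IsPreconnected t)
    (hs : ∀ j, IsClosed (s j)) (hdisj : Pairwise (Disjoint on s))
    (hts : t ⊆ ⋃ j, s j) (hxt : x ∈ t) (hxi : x ∈ s i) : t ⊆ s i := by
  set v := ⋃ j ∈ ({i}ᶜ : Set ι), s j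
  have hv : IsClosed v := (Set.toFinite _).isClosed_biUnion fun j _ => hs j
  have hiv : Disjoint (s i) v := disjoint_iUnion₂_right.2 fun j hj => hdisj (Ne.symm hj)
  have htiv : t ⊆ s i ∪ v := by
    intro y hy
    obtain ⟨j, hj⟩ := mem_iUnion.1 (hts hy)
    by_cases hji : j = i
    · exact Or.inl (hji ▸ hj)
    · exact Or.inr (mem_biUnion hji hj)
  refine (isPreconnected_iff_subset_of_disjoint_closed.1 ht _ _ (hs i) hv htiv
    (by rw [hiv.inter_eq, inter_empty])).resolve_right fun htv => ?_
  exact hiv.ne_of_mem hxi (htv hxt) rfl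

theorem tendsto_two_zpow_neg_natCast_atTop_nhds_zero :
    Tendsto (fun q : ℕ => (2 : ℝ) ^ (-(q : ℤ))) atTop (𝓝 0) := by
  simp only [zpow_neg, zpow_natCast]
  exact tendsto_inv_atTop_zero.comp (tendsto_pow_atTop_atTop_of_one_lt one_lt_two)

namespace IsNebula

variable {q : ℕ} {A : Set ℝ}

theorem zero_mem (h : IsNebula q A) : (0 : ℝ) ∈ A := by
  obtain ⟨-, -, k, I, rfl, h0, -⟩ := h
  exact mem_iUnion.2 ⟨0, h0⟩

theorem sub_lt_of_Icc_subset (h : IsNebula q A) {x y : ℝ} (hxy : x ≤ y) (hyq : y ≤ q)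
    (hA : Icc x y ⊆ A) : y - x < 2 ^ (-(q : ℤ)) := by
  obtain ⟨-, -, k, I, rfl, -, hbdd, ⟨a, hlast, hqa⟩, hdisj⟩ := h
  have hclosed : ∀ i, IsClosed (I i) := by
    intro i
    rcases (Fin.le_last i).lt_or_eq with hi | rfl
    · obtain ⟨c, d, -, hcd, -⟩ := hbdd i hi
      rw [hcd]
      exact isClosed_Icc
    · rw [hlast]
      exact isClosed_Ici
  obtain ⟨i, hxi⟩ := mem_iUnion.1 (hA (left_mem_Icc.2 hxy))
  have hIcc := isPreconnected_Icc.subset_of_subset_iUnion_of_isClosed hclosed hdisj hA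
    (left_mem_Icc.2 hxy) hxi
  rcases (Fin.le_last i).lt_or_eq with hi | rfl
  · obtain ⟨c, d, -, hcd, hdc⟩ := hbdd i hi
    rw [hcd, Icc_subset_Icc_iff hxy] at hIcc
    linarith [hIcc.1, hIcc.2]
  · rw [hlast] at hIcc
    linarith [show a ≤ y from hIcc (right_mem_Icc.2 hxy)]

end IsNebula

theorem eq_of_Icc_subset_iInter_nebula {A : ℕ → Set ℝ} (hA : ∀ q, IsNebula q (A q)) {x y : ℝ}
    (hxy : x ≤ y) (hIcc : Icc x y ⊆ ⋂ q, A q) : x = y := by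
  have hle : ∀ᶠ q : ℕ in atTop, y - x ≤ 2 ^ (-(q : ℤ)) :=
    (eventually_ge_atTop ⌈y⌉₊).mono fun q hq =>
      ((hA q).sub_lt_of_Icc_subset hxy ((Nat.le_ceil y).trans (by exact_mod_cast hq))
        (hIcc.trans (iInter_subset A q))).le
  linarith [ge_of_tendsto tendsto_two_zpow_neg_natCast_atTop_nhds_zero hle]

theorem iInter_nebula_closed_totallyDisconnected
    (A : ℕ → Set ℝ) (hA : ∀ q : ℕ, IsNebula q (A q)) :
    IsClosed (⋂ q, A q) ∧ IsTotallyDisconnected (⋂ q, A q) ∧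
    (⋂ q, A q) ⊆ Set.Ici 0 ∧ (0 : ℝ) ∈ ⋂ q, A q := by
  refine ⟨isClosed_iInter fun q => (hA q).1, ?_, (iInter_subset A 0).trans (hA 0).2.1,
    mem_iInter.2 fun q => (hA q).zero_mem⟩
  intro S hS hSconn x hx y hy
  wlog hxy : x ≤ y generalizing x y
  · exact (this hy hx (le_of_not_ge hxy)).symm
  exact eq_of_Icc_subset_iInter_nebula hA hxy ((hSconn.ordConnected.out hx hy).trans hS)
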